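/- Let Z ~ Multinomial(N, p) with N = n·rₙ, p a positive probability vector on {1,…,n}. Then E[∏ᵢ (Zᵢ/pᵢ)^{Zᵢ}] ≤ √(2πeN)·N^{N}·exp{n·Δ(rₙ)}, where Δ(r) = inf_{q>2} {(1−1/q)·Ψ(r) + (1/q)·log[1 + (2π)^{−q/2}ζ(q/2)]} and Ψ(t) = (1+t)log(1+t) − t·log t. -/

import Mathlib

/-!
Write `N = n r`. Since `p_i^{z_i} (z_i/p_i)^{z_i} = z_i^{z_i}`, the expectation equals
`N! e^N A`, where `A = ∑_z ∏_i a(z_i)` over the compositions `z` of `N` into `n` parts and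
`a(k) = k^k e^{-k}/k!` is the Poisson(`k`) probability of the value `k`. Stirling's formula gives
`N! e^N ≤ √(2πeN) N^N` and `a(k) ≤ (2πk)^{-1/2}`. For `q > 2` the power mean inequality bounds
`A^q` by `#compositions^{q-1} ∑_z ∏_i a(z_i)^q`; the number of compositions is at most
`exp(nΨ(r))` (compare with the coefficients of `(1 - θ)^{-n}` at `θ = r/(1+r)`), and the second
sum is at most `(∑_k a(k)^q)^n ≤ (1 + (2π)^{-q/2} ζ(q/2))^n`. Optimising over `q` gives `Δ(r)`.
-/

open Real

/-- `Ψ(t) = (1+t)log(1+t) − t·log t`. -/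
noncomputable def Psi (t : ℝ) : ℝ := (1 + t) * Real.log (1 + t) - t * Real.log t

/-- Riemann's zeta function for real arguments, `ζ(s) = ∑_{j=1}^∞ j^{-s}`. -/
noncomputable def zetaReal (s : ℝ) : ℝ := ∑' j : ℕ, ((j : ℝ) + 1) ^ (-s)

/-- `Δ(r) = inf_{q>2} {(1−1/q)·Ψ(r) + (1/q)·log[1 + (2π)^{−q/2}ζ(q/2)]}`. -/
noncomputable def Delta (r : ℝ) : ℝ :=
  sInf {x : ℝ | ∃ q : ℝ, 2 < q ∧
    x = (1 - 1/q) * Psi r + (1/q) * Real.log (1 + (2 * π) ^ (-q/2) * zetaReal (q/2))}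

open Finset
open scoped Nat

namespace Stirling

theorem stirlingSeq_le_exp_one_div_sqrt_two {n : ℕ} (hn : n ≠ 0) : stirlingSeq n ≤ exp 1 / √2 := by
  obtain ⟨m, rfl⟩ := Nat.exists_eq_succ_of_ne_zero hn
  simpa [stirlingSeq_one] using stirlingSeq'_antitone (Nat.zero_le m)

theorem factorial_le_stirling {n : ℕ} (hn : n ≠ 0) :
    (n ! : ℝ) ≤ exp 1 * √n * (n / exp 1) ^ n := by
  have h := stirlingSeq_le_exp_one_div_sqrt_two hn
  rw [stirlingSeq, div_le_div_iff₀ (by positivity) (by positivity), sqrt_mul zero_le_two] at h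
  have h2 : (0 : ℝ) < √2 := by positivity
  nlinarith

theorem factorial_mul_exp_le {n : ℕ} (hn : n ≠ 0) :
    (n ! : ℝ) * exp n ≤ √(2 * π * exp 1 * n) * (n : ℝ) ^ n := by
  have he : exp 1 ≤ √(2 * π * exp 1) := by
    rw [le_sqrt (exp_pos 1).le (by positivity)]
    nlinarith [pi_gt_three, exp_one_lt_d9, exp_pos 1]
  calc (n ! : ℝ) * exp n ≤ exp 1 * √n * (n / exp 1) ^ n * exp n := by
        gcongr; exact factorial_le_stirling hn
    _ = exp 1 * √n * (n : ℝ) ^ n := by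
        rw [div_pow, ← exp_nat_mul, mul_one]; field_simp
    _ ≤ √(2 * π * exp 1) * √n * (n : ℝ) ^ n := by gcongr
    _ = √(2 * π * exp 1 * n) * (n : ℝ) ^ n := by rw [← sqrt_mul (by positivity)]

end Stirling

noncomputable def poissonModeMass (k : ℕ) : ℝ := (k : ℝ) ^ k * exp (-k) / k !

theorem poissonModeMass_nonneg (k : ℕ) : 0 ≤ poissonModeMass k := by
  unfold poissonModeMass; positivity

theorem poissonModeMass_zero : poissonModeMass 0 = 1 := by simp [poissonModeMass]

theorem poissonModeMass_rpow_le {k : ℕ} (hk : k ≠ 0) {q : ℝ} (hq : 0 ≤ q) :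
    poissonModeMass k ^ q ≤ (2 * π) ^ (-q / 2) * (k : ℝ) ^ (-q / 2) := by
  have hk' : (0 : ℝ) < k := by positivity
  have hle : poissonModeMass k ≤ (2 * π * k) ^ (-(1 / 2) : ℝ) := by
    rw [rpow_neg (by positivity), ← sqrt_eq_rpow, poissonModeMass,
      div_le_iff₀ (by positivity), inv_mul_eq_div, le_div_iff₀ (by positivity)]
    calc (k : ℝ) ^ k * exp (-k) * √(2 * π * k) = √(2 * π * k) * (k / exp 1) ^ k := by
          rw [div_pow, ← exp_nat_mul, mul_one, exp_neg]; ring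
      _ ≤ k ! := Stirling.le_factorial_stirling k
  calc poissonModeMass k ^ q ≤ ((2 * π * k) ^ (-(1 / 2) : ℝ)) ^ q :=
        rpow_le_rpow (poissonModeMass_nonneg k) hle hq
    _ = (2 * π) ^ (-q / 2) * (k : ℝ) ^ (-q / 2) := by
        rw [← rpow_mul (by positivity), mul_rpow (by positivity) hk'.le]; ring_nf

theorem summable_nat_add_one_rpow_neg {s : ℝ} (hs : 1 < s) :
    Summable (fun j : ℕ => ((j : ℝ) + 1) ^ (-s)) := by
  have h := (summable_nat_add_iff 1).mpr (summable_nat_rpow.mpr (by linarith : -s < -1))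
  simpa using h

theorem sum_range_poissonModeMass_rpow_le {q : ℝ} (hq : 2 < q) (N : ℕ) :
    ∑ k ∈ range (N + 1), poissonModeMass k ^ q ≤ 1 + (2 * π) ^ (-q / 2) * zetaReal (q / 2) := by
  rw [sum_range_succ', poissonModeMass_zero, one_rpow, add_comm]
  gcongr 1 + ?_
  calc ∑ k ∈ range N, poissonModeMass (k + 1) ^ q
      ≤ ∑ k ∈ range N, (2 * π) ^ (-q / 2) * ((k : ℝ) + 1) ^ (-(q / 2)) := by
        gcongr with k
        rw [← neg_div]
        exact_mod_cast poissonModeMass_rpow_le k.succ_ne_zero (by linarith)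
    _ = (2 * π) ^ (-q / 2) * ∑ k ∈ range N, ((k : ℝ) + 1) ^ (-(q / 2)) := (mul_sum ..).symm
    _ ≤ (2 * π) ^ (-q / 2) * zetaReal (q / 2) := by
        gcongr
        exact (summable_nat_add_one_rpow_neg (by linarith)).sum_le_tsum _
          fun k _ => rpow_nonneg (by positivity) _

theorem exp_mul_prod_poissonModeMass {n N : ℕ} {z : Fin n → ℕ} (hz : ∑ i, z i = N) :
    exp N * ∏ i, poissonModeMass (z i) = (∏ i, (z i : ℝ) ^ z i) / ∏ i, ((z i)! : ℝ) := by
  simp only [poissonModeMass, prod_div_distrib, prod_mul_distrib, ← exp_sum, sum_neg_distrib]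
  rw [← hz, Nat.cast_sum, ← mul_div_assoc, mul_left_comm, ← exp_add, add_neg_cancel, exp_zero,
    mul_one]

theorem multinomial_mul_prod_div_pow_eq {n N : ℕ} {p : Fin n → ℝ} (hp : ∀ i, p i ≠ 0)
    {z : Fin n → ℕ} (hz : ∑ i, z i = N) :
    ((N ! : ℝ) / ∏ i, ((z i)! : ℝ)) * (∏ i, p i ^ z i) * ∏ i, ((z i : ℝ) / p i) ^ z i
      = (N ! : ℝ) * exp N * ∏ i, poissonModeMass (z i) := by
  have hpow : ∀ i, p i ^ z i * ((z i : ℝ) / p i) ^ z i = (z i : ℝ) ^ z i := fun i => by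
    rw [← mul_pow, mul_div_cancel₀ _ (hp i)]
  rw [mul_assoc, ← prod_mul_distrib, mul_assoc, exp_mul_prod_poissonModeMass hz,
    prod_congr rfl fun i _ => hpow i, div_mul_eq_mul_div, mul_div_assoc]

theorem sum_antidiagonalTuple_prod_le_pow {R : Type*} [CommSemiring R] [PartialOrder R]
    [IsOrderedRing R] (n N : ℕ) {g : ℕ → R} (hg : ∀ k, 0 ≤ g k) :
    ∑ z ∈ Nat.antidiagonalTuple n N, ∏ i, g (z i) ≤ (∑ k ∈ range (N + 1), g k) ^ n := by
  have hsub : Nat.antidiagonalTuple n N ⊆ Fintype.piFinset fun _ => range (N + 1) := by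
    intro z hz
    rw [Fintype.mem_piFinset]
    intro i
    rw [mem_range, Nat.lt_succ_iff, ← Nat.mem_antidiagonalTuple.mp hz]
    exact single_le_sum (fun _ _ => Nat.zero_le _) (mem_univ i)
  calc ∑ z ∈ Nat.antidiagonalTuple n N, ∏ i, g (z i)
      ≤ ∑ z ∈ Fintype.piFinset fun _ : Fin n => range (N + 1), ∏ i, g (z i) :=
        sum_le_sum_of_subset_of_nonneg hsub fun z _ _ => prod_nonneg fun i _ => hg _
    _ = (∑ k ∈ range (N + 1), g k) ^ n := by rw [sum_prod_piFinset, prod_const, card_fin]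

theorem card_antidiagonalTuple_mul_pow_le {θ : ℝ} (hθ₀ : 0 ≤ θ) (hθ₁ : θ < 1) (n N : ℕ) :
    #(Nat.antidiagonalTuple n N) * θ ^ N ≤ (1 - θ)⁻¹ ^ n := by
  have hprod : ∀ z ∈ Nat.antidiagonalTuple n N, θ ^ N = ∏ i, θ ^ z i := fun z hz => by
    rw [prod_pow_eq_pow_sum, Nat.mem_antidiagonalTuple.mp hz]
  rw [← nsmul_eq_mul, ← sum_const, sum_congr rfl hprod]
  refine (sum_antidiagonalTuple_prod_le_pow n N fun k => pow_nonneg hθ₀ k).trans ?_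
  gcongr
  rw [← tsum_geometric_of_lt_one hθ₀ hθ₁]
  exact (summable_geometric_of_lt_one hθ₀ hθ₁).sum_le_tsum _ fun k _ => pow_nonneg hθ₀ k

theorem exp_mul_Psi (n : ℕ) {r : ℕ} (hr : r ≠ 0) :
    exp (n * Psi r) = (1 + r) ^ n * ((1 + r) / r) ^ (n * r) := by
  have hr' : (0 : ℝ) < r := by positivity
  have : n * Psi r = n * log (1 + r) + (n * r : ℕ) * log ((1 + r) / r) := by
    rw [Psi, log_div (by positivity) hr'.ne']; push_cast; ring
  rw [this, exp_add, exp_nat_mul, exp_nat_mul, exp_log (by positivity), exp_log (by positivity)]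

theorem card_antidiagonalTuple_le_exp_Psi (n : ℕ) {r : ℕ} (hr : r ≠ 0) :
    #(Nat.antidiagonalTuple n (n * r)) ≤ exp (n * Psi r) := by
  have hr' : (0 : ℝ) < r := by positivity
  have h := card_antidiagonalTuple_mul_pow_le (θ := r / (1 + r)) (by positivity)
    ((div_lt_one (by positivity)).mpr (by linarith)) n (n * r)
  have h1 : (1 - r / (1 + r) : ℝ)⁻¹ = 1 + r := by field_simp; ring
  rw [h1, ← le_div_iff₀ (by positivity), div_eq_mul_inv, ← inv_pow, inv_div] at h
  rwa [exp_mul_Psi n hr]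

theorem sum_prod_poissonModeMass_le (n : ℕ) {r : ℕ} (hr : r ≠ 0) {q : ℝ} (hq : 2 < q) :
    ∑ z ∈ Nat.antidiagonalTuple n (n * r), ∏ i, poissonModeMass (z i)
      ≤ exp (n * ((1 - 1 / q) * Psi r
          + 1 / q * log (1 + (2 * π) ^ (-q / 2) * zetaReal (q / 2)))) := by
  set F := Nat.antidiagonalTuple n (n * r)
  set A := ∑ z ∈ F, ∏ i, poissonModeMass (z i)
  set s := 1 + (2 * π) ^ (-q / 2) * zetaReal (q / 2)
  have hq₀ : 0 < q := by linarith
  have hs : 0 < s := by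
    have hζ : 0 ≤ zetaReal (q / 2) := tsum_nonneg fun j => rpow_nonneg (by positivity) _
    positivity
  have hmass : ∀ z : Fin n → ℕ, 0 ≤ ∏ i, poissonModeMass (z i) :=
    fun z => prod_nonneg fun i _ => poissonModeMass_nonneg _
  have hmass_rpow (k : ℕ) : 0 ≤ poissonModeMass k ^ q := rpow_nonneg (poissonModeMass_nonneg k) q
  have hA : 0 ≤ A := sum_nonneg fun z _ => hmass z
  have hpow : A ^ q ≤ exp (n * Psi r) ^ (q - 1) * s ^ n :=
    calc A ^ q ≤ (#F : ℝ) ^ (q - 1) * ∑ z ∈ F, (∏ i, poissonModeMass (z i)) ^ q :=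
          Real.rpow_sum_le_const_mul_sum_rpow_of_nonneg F (by linarith) fun z _ => hmass z
      _ = (#F : ℝ) ^ (q - 1) * ∑ z ∈ F, ∏ i, poissonModeMass (z i) ^ q := by
          simp only [finsetProd_rpow _ _ fun i _ => poissonModeMass_nonneg _]
      _ ≤ exp (n * Psi r) ^ (q - 1) * (∑ k ∈ range (n * r + 1), poissonModeMass k ^ q) ^ n :=
          mul_le_mul
            (rpow_le_rpow (by positivity) (card_antidiagonalTuple_le_exp_Psi n hr) (by linarith))
            (sum_antidiagonalTuple_prod_le_pow n _ hmass_rpow)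
            (sum_nonneg fun z _ => prod_nonneg fun i _ => hmass_rpow _) (by positivity)
      _ ≤ exp (n * Psi r) ^ (q - 1) * s ^ n := by
          gcongr
          · exact sum_nonneg fun k _ => hmass_rpow k
          · exact sum_range_poissonModeMass_rpow_le hq _
  calc A = (A ^ q) ^ (1 / q) := by rw [← rpow_mul hA, mul_one_div_cancel hq₀.ne', rpow_one]
    _ ≤ (exp (n * Psi r) ^ (q - 1) * s ^ n) ^ (1 / q) := by gcongr
    _ = exp (n * ((1 - 1 / q) * Psi r + 1 / q * log s)) := by
        rw [← exp_mul, ← exp_log (pow_pos hs n), ← exp_add, ← exp_mul, log_pow]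
        congr 1
        field_simp

theorem le_exp_mul_Delta {x : ℝ} {n : ℕ} (hn : n ≠ 0) {r : ℝ}
    (h : ∀ q : ℝ, 2 < q → x ≤ exp (n * ((1 - 1 / q) * Psi r
      + 1 / q * log (1 + (2 * π) ^ (-q / 2) * zetaReal (q / 2))))) :
    x ≤ exp (n * Delta r) := by
  rcases le_or_gt x 0 with hx | hx
  · exact hx.trans (exp_pos _).le
  have hn' : (0 : ℝ) < n := by positivity
  rw [← exp_log hx, exp_le_exp, ← div_le_iff₀' hn']
  refine le_csInf ⟨_, 3, by norm_num, rfl⟩ ?_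
  rintro _ ⟨q, hq, rfl⟩
  rw [div_le_iff₀' hn', ← exp_le_exp, exp_log hx]
  exact h q hq

theorem stmt_16_general (n r : ℕ) (hn : 1 ≤ n) (hr : 1 ≤ r)
    (p : Fin n → ℝ) (hp : ∀ i, 0 < p i) :
    ∑ z ∈ Finset.Nat.antidiagonalTuple n (n * r),
        (((n * r).factorial : ℝ) / ∏ i, ((z i).factorial : ℝ)) * (∏ i, p i ^ z i) *
          ∏ i, ((z i : ℝ) / p i) ^ z i
      ≤ Real.sqrt (2 * π * Real.exp 1 * (n * r)) * ((n * r : ℝ) ^ (n * r : ℕ)) *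
          Real.exp (n * Delta r) := by
  have hn₀ : n ≠ 0 := by positivity
  have hr₀ : r ≠ 0 := by positivity
  rw [sum_congr rfl fun z hz => multinomial_mul_prod_div_pow_eq (fun i => (hp i).ne')
    (Nat.mem_antidiagonalTuple.mp hz), ← mul_sum]
  have hA : 0 ≤ ∑ z ∈ Nat.antidiagonalTuple n (n * r), ∏ i, poissonModeMass (z i) :=
    sum_nonneg fun z _ => prod_nonneg fun i _ => poissonModeMass_nonneg _
  calc _ ≤ √(2 * π * exp 1 * (n * r : ℕ)) * ((n * r : ℕ) : ℝ) ^ (n * r) * exp (n * Delta r) :=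
        mul_le_mul (Stirling.factorial_mul_exp_le (by positivity))
          (le_exp_mul_Delta hn₀ fun q hq => sum_prod_poissonModeMass_le n hr₀ hq) hA
          (by positivity)
    _ = _ := by push_cast; ring

theorem stmt_16 (n r : ℕ) (hn : 1 ≤ n) (hr : 1 ≤ r)
    (p : Fin n → ℝ) (hp : ∀ i, 0 < p i) (hps : ∑ i, p i = 1) :
    ∑ z ∈ Finset.Nat.antidiagonalTuple n (n * r),
        (((n * r).factorial : ℝ) / ∏ i, ((z i).factorial : ℝ)) * (∏ i, p i ^ z i) *
          ∏ i, ((z i : ℝ) / p i) ^ z i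
      ≤ Real.sqrt (2 * π * Real.exp 1 * (n * r)) * ((n * r : ℝ) ^ (n * r : ℕ)) *
          Real.exp (n * Delta r) :=
  stmt_16_general n r hn hr p hp
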